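/- arXiv:1403.4281 — 2 statements merged into one kernel-verified Lean document; each statement's English description precedes it below -/
import Mathlib

section
/- In the presentation ⟨a, t ∣ a⁸, a⁻²tata²t⁻², a²tata⁻²t⁻², a⁴t⁻¹a⁻⁴t⟩, the relator a²tata⁻²t⁻² is a consequence of the other three relators; i.e., this group is isomorphic to ⟨a, t ∣ a⁸, a⁻²tata²t⁻², a⁴t⁻¹a⁻⁴t⟩. -/
/-- In the presentation ⟨a, t ∣ a⁸, a⁻²tata²t⁻², a²tata⁻²t⁻², a⁴t⁻¹a⁻⁴t⟩ the
relator a²tata⁻²t⁻² is a consequence of the other three: as an element of the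
free group on {a, t} it lies in the normal closure of the other three relators. -/
theorem stmt16 :
    letI a : FreeGroup (Fin 2) := FreeGroup.of 0
    letI t : FreeGroup (Fin 2) := FreeGroup.of 1
    a ^ 2 * t * a * t * a ^ (-2 : ℤ) * t ^ (-2 : ℤ) ∈
      Subgroup.normalClosure
        {a ^ 8, a ^ (-2 : ℤ) * t * a * t * a ^ 2 * t ^ (-2 : ℤ),
         a ^ 4 * t⁻¹ * a ^ (-4 : ℤ) * t} := by
  set a : FreeGroup (Fin 2) := FreeGroup.of 0 with ha
  set t : FreeGroup (Fin 2) := FreeGroup.of 1 with ht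
  set N := Subgroup.normalClosure
      ({a ^ 8, a ^ (-2 : ℤ) * t * a * t * a ^ 2 * t ^ (-2 : ℤ),
        a ^ 4 * t⁻¹ * a ^ (-4 : ℤ) * t} : Set (FreeGroup (Fin 2))) with hN
  haveI : N.Normal := Subgroup.normalClosure_normal
  have h2 : a ^ (-2 : ℤ) * t * a * t * a ^ 2 * t ^ (-2 : ℤ) ∈ N :=
    Subgroup.subset_normalClosure (by simp)
  have h3 : a ^ 4 * t⁻¹ * a ^ (-4 : ℤ) * t ∈ N :=
    Subgroup.subset_normalClosure (by simp)
  have key : a ^ 2 * t * a * t * a ^ (-2 : ℤ) * t ^ (-2 : ℤ) =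
      (a ^ 4 * (a ^ (-2 : ℤ) * t * a * t * a ^ 2 * t ^ (-2 : ℤ)) * (a ^ 4)⁻¹) *
      (t * (a ^ 4 * t⁻¹ * a ^ (-4 : ℤ) * t)⁻¹ * t⁻¹) *
      (t ^ 2 * (a ^ 4 * t⁻¹ * a ^ (-4 : ℤ) * t)⁻¹ * (t ^ 2)⁻¹) := by
    group
  rw [key]
  exact mul_mem (mul_mem (this.conj_mem _ h2 _) (this.conj_mem _ (inv_mem h3) _))
    (this.conj_mem _ (inv_mem h3) _)
end

section
/- Let π = B*_H φ be an HNN extension with base B = Q(16) = ⟨a, b ∣ a⁴ = b² = (ab)²⟩ and associated subgroups ⟨a², b⟩ and H = ⟨a², ab⟩, both isomorphic to Q(8), where the two embeddings of Q(8) = ⟨x, y⟩ into B are given by j(x) = a², j(y) = b and φ(x) = ab, φ(y) = a². Then the stable letter t normally generates π, i.e., the normal closure of t in π is all of π. -/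
/-- Relators for the HNN extension π = Q(16)*_{Q(8)} φ, where
Q(16) = ⟨a, b ∣ a⁴ = b², b² = (ab)²⟩ (a = 0, b = 1), the associated subgroup is
C = ⟨a², b⟩ ≅ Q(8) (via x ↦ a², y ↦ b) and φ sends x ↦ ab, y ↦ a²; the stable
letter is t = 2, with HNN relations t a² t⁻¹ = ab and t b t⁻¹ = a². -/
def HNNRels : Set (FreeGroup (Fin 3)) :=
  {(FreeGroup.of 0) ^ 4 * ((FreeGroup.of 1) ^ 2)⁻¹,
   (FreeGroup.of 1) ^ 2 * ((FreeGroup.of 0 * FreeGroup.of 1) ^ 2)⁻¹,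
   FreeGroup.of 2 * (FreeGroup.of 0) ^ 2 * (FreeGroup.of 2)⁻¹ *
     (FreeGroup.of 0 * FreeGroup.of 1)⁻¹,
   FreeGroup.of 2 * FreeGroup.of 1 * (FreeGroup.of 2)⁻¹ * (((FreeGroup.of 0) ^ 2)⁻¹)}

lemma rel_one {r : FreeGroup (Fin 3)} (h : r ∈ HNNRels) :
    PresentedGroup.mk HNNRels r = 1 := by
  exact (QuotientGroup.eq_one_iff r).mpr (Subgroup.subset_normalClosure h)

/-- The stable letter t normally generates the HNN extension π = Q(16)*_{Q(8)} φ. -/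
theorem stmt18 :
    Subgroup.normalClosure {(PresentedGroup.of 2 : PresentedGroup HNNRels)} =
      (⊤ : Subgroup (PresentedGroup HNNRels)) := by
  set a : PresentedGroup HNNRels := PresentedGroup.of 0 with ha
  set b : PresentedGroup HNNRels := PresentedGroup.of 1 with hb
  set t : PresentedGroup HNNRels := PresentedGroup.of 2 with ht
  set N := Subgroup.normalClosure {t} with hN
  have hnorm : N.Normal := Subgroup.normalClosure_normal
  have htN : t ∈ N := Subgroup.subset_normalClosure rfl
  -- relations
  have h3 : t * a ^ 2 * t⁻¹ * (a * b)⁻¹ = 1 := by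
    have := rel_one (r := FreeGroup.of 2 * (FreeGroup.of 0) ^ 2 * (FreeGroup.of 2)⁻¹ *
      (FreeGroup.of 0 * FreeGroup.of 1)⁻¹) (by simp [HNNRels])
    simpa [ha, hb, ht, PresentedGroup.of] using this
  have h4 : t * b * t⁻¹ * (a ^ 2)⁻¹ = 1 := by
    have := rel_one (r := FreeGroup.of 2 * FreeGroup.of 1 * (FreeGroup.of 2)⁻¹ *
      (((FreeGroup.of 0) ^ 2)⁻¹)) (by simp [HNNRels])
    simpa [ha, hb, ht, PresentedGroup.of] using this
  have h3' : t * a ^ 2 * t⁻¹ = a * b := by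
    rw [← mul_inv_eq_one]; exact h3
  have h4' : t * b * t⁻¹ = a ^ 2 := by
    rw [← mul_inv_eq_one]; exact h4
  -- t g t⁻¹ g⁻¹ ∈ N for any g
  have key : ∀ g : PresentedGroup HNNRels, t * g * t⁻¹ * g⁻¹ ∈ N := by
    intro g
    have h1 : g * t * g⁻¹ ∈ N := hnorm.conj_mem t htN g
    have : t * g * t⁻¹ * g⁻¹ = t * (g * t * g⁻¹)⁻¹ := by group
    rw [this]
    exact N.mul_mem htN (N.inv_mem h1)
  have hab : a * b * (a ^ 2)⁻¹ ∈ N := by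
    have := key (a ^ 2); rwa [h3'] at this
  have hba : b * a⁻¹ ∈ N := by
    have := hnorm.conj_mem _ hab a⁻¹
    have e : a⁻¹ * (a * b * (a ^ 2)⁻¹) * a⁻¹⁻¹ = b * a⁻¹ := by group
    rwa [e] at this
  have ha2b : a ^ 2 * b⁻¹ ∈ N := by
    have := key b; rwa [h4'] at this
  have haN : a ∈ N := by
    have := N.mul_mem ha2b hba
    have e : a ^ 2 * b⁻¹ * (b * a⁻¹) = a := by group
    rwa [e] at this
  have hbN : b ∈ N := by
    have := N.mul_mem hba haN
    have e : b * a⁻¹ * a = b := by group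
    rwa [e] at this
  rw [eq_top_iff, ← PresentedGroup.closure_range_of HNNRels]
  rw [Subgroup.closure_le]
  rintro x ⟨i, rfl⟩
  fin_cases i
  · exact haN
  · exact hbN
  · exact htN
end
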